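/- arXiv:0906.0186 — 4 statements merged into one kernel-verified Lean document; each statement's English description precedes it below -/
import Mathlib

section
/- Let M be an n×n matrix over L of Iwahori form. Fix 1 ≤ m ≤ n, and order the strictly increasing m-tuples of indices from {1, …, n} lexicographically. For strictly increasing m-tuples s and t, let M_{s,t} denote the m×m minor of M with rows indexed by s and columns indexed by t. Then det(M_{s,t}) ∈ o_L for all s and t; det(M_{s,s}) ∈ o_L^× for every s; and det(M_{s,t}) ∈ ε·o_L whenever s is lexicographically greater than t. (Equivalently, the m-th exterior power matrix ⋀^m M, written in the lexicographically ordered basis of increasing m-tuples, is again of Iwahori form.) -/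
noncomputable section

open Matrix

/-- The ε-adic valuation on `L = k̄((ε))`, with `val 0 = ∞`. -/
def val {K : Type*} [Field K] (x : LaurentSeries K) : WithTop ℤ := x.orderTop

/-- A square matrix over `L = k̄((ε))` is of Iwahori form: diagonal entries are units of
`o_L` (valuation `0`), entries above the diagonal lie in `o_L` (valuation `≥ 0`), and
entries below the diagonal lie in `ε·o_L` (valuation `≥ 1`). -/
def IwahoriForm {K : Type*} [Field K] {n : ℕ}
    (M : Matrix (Fin n) (Fin n) (LaurentSeries K)) : Prop :=
  (∀ i, val (M i i) = 0) ∧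
  (∀ i j : Fin n, i < j → 0 ≤ val (M i j)) ∧
  (∀ i j : Fin n, j < i → 1 ≤ val (M i j))

/-- `s` is lexicographically greater than `t` (for strictly increasing `m`-tuples of
indices, viewed as functions `Fin m → Fin n`). -/
def LexGT {n m : ℕ} (s t : Fin m → Fin n) : Prop :=
  ∃ p : Fin m, (∀ q : Fin m, q < p → s q = t q) ∧ t p < s p

/-!
Expand each minor by the Leibniz formula. Every entry of an Iwahori-form matrix lies in `o_L`,
so every term lies in `o_L`, and a term lies in `ε·o_L` as soon as one of its factors sits
strictly below the diagonal. A term of the minor with rows `s` and columns `t` indexed by `σ`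
avoiding the region below the diagonal satisfies `s (σ i) ≤ t i` for all `i`; by pigeonhole this
forces `s ≤ t` pointwise, which excludes `s >lex t`, and for `s = t` it forces `σ = 1`, whose
term is a product of units.
-/

theorem Equiv.Perm.eq_one_of_forall_apply_le {α : Type*} [LinearOrder α] [WellFoundedLT α]
    {σ : Equiv.Perm α} (h : ∀ i, σ i ≤ i) : σ = 1 := by
  ext i
  induction i using WellFoundedLT.induction with
  | _ i ih =>
    by_contra hne
    exact hne (σ.injective (ih (σ i) ((h i).lt_of_ne hne)))

theorem le_of_forall_comp_perm_le {m : ℕ} {β : Type*} [Preorder β] {s t : Fin m → β}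
    (hs : Monotone s) (ht : Monotone t) (σ : Equiv.Perm (Fin m)) (h : ∀ i, s (σ i) ≤ t i) :
    s ≤ t := by
  intro i
  -- `σ` cannot map the `i + 1` indices `≤ i` into the `i` indices `< i`.
  have hcard : (Finset.Iio i).card < ((Finset.Iic i).map σ.toEmbedding).card := by simp
  obtain ⟨_, hmem, hnot⟩ := Finset.exists_mem_notMem_of_card_lt_card hcard
  obtain ⟨q, hqi, rfl⟩ := Finset.mem_map.mp hmem
  calc s i ≤ s (σ q) := hs (not_lt.mp (by simpa using hnot))
    _ ≤ t q := h q
    _ ≤ t i := ht (Finset.mem_Iic.mp hqi)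

section Valuation

variable {K : Type*} [Field K]

theorem val_mul (x y : LaurentSeries K) : val (x * y) = val x + val y :=
  (HahnSeries.addVal ℤ K).map_mul x y

theorem val_prod {ι : Type*} (s : Finset ι) (f : ι → LaurentSeries K) :
    val (∏ i ∈ s, f i) = ∑ i ∈ s, val (f i) := by
  classical
  induction s using Finset.induction with
  | empty => exact HahnSeries.orderTop_one
  | insert _ _ h ih => rw [Finset.prod_insert h, Finset.sum_insert h, val_mul, ih]

theorem le_val_sum {ι : Type*} {s : Finset ι} {f : ι → LaurentSeries K} {c : WithTop ℤ}
    (h : ∀ i ∈ s, c ≤ val (f i)) : c ≤ val (∑ i ∈ s, f i) :=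
  (HahnSeries.addVal ℤ K).map_le_sum h

theorem val_units_int_smul (u : ℤˣ) (x : LaurentSeries K) : val (u • x) = val x := by
  rcases Int.units_eq_one_or u with rfl | rfl
  · rw [one_smul]
  · rw [Units.neg_smul, one_smul]
    exact HahnSeries.orderTop_neg

variable {ι : Type*} [Fintype ι] [DecidableEq ι]

theorem le_val_det {A : Matrix ι ι (LaurentSeries K)} {c : WithTop ℤ}
    (h : ∀ σ : Equiv.Perm ι, c ≤ val (∏ i, A (σ i) i)) : c ≤ val A.det := by
  rw [Matrix.det_apply]
  exact le_val_sum fun σ _ => (h σ).trans_eq (val_units_int_smul _ _).symm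

theorem val_det_eq_zero {A : Matrix ι ι (LaurentSeries K)} (hdiag : val (∏ i, A i i) = 0)
    (hoff : ∀ σ : Equiv.Perm ι, σ ≠ 1 → 0 < val (∏ i, A (σ i) i)) : val A.det = 0 := by
  rw [Matrix.det_apply, ← Finset.add_sum_erase _ _ (Finset.mem_univ 1)]
  have hone : val (Equiv.Perm.sign (1 : Equiv.Perm ι) • ∏ i, A ((1 : Equiv.Perm ι) i) i) = 0 := by
    rw [val_units_int_smul]
    exact hdiag
  have hrest : 0 < val (∑ σ ∈ Finset.univ.erase 1, Equiv.Perm.sign σ • ∏ i, A (σ i) i) :=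
    (HahnSeries.addVal ℤ K).map_lt_sum WithTop.zero_ne_top fun σ hσ =>
      (hoff σ (Finset.ne_of_mem_erase hσ)).trans_eq (val_units_int_smul _ _).symm
  exact (HahnSeries.orderTop_add_eq_left (hone.trans_lt hrest)).trans hone

end Valuation

namespace IwahoriForm

variable {K : Type*} [Field K] {n : ℕ} {M : Matrix (Fin n) (Fin n) (LaurentSeries K)}

theorem zero_le_val (hM : IwahoriForm M) (i j : Fin n) : 0 ≤ val (M i j) := by
  rcases lt_trichotomy i j with h | rfl | h
  · exact hM.2.1 i j h
  · exact (hM.1 i).ge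
  · exact zero_le_one.trans (hM.2.2 i j h)

variable {ι : Type*} [Fintype ι]

theorem zero_le_val_prod (hM : IwahoriForm M) (r c : ι → Fin n) :
    0 ≤ val (∏ i, M (r i) (c i)) := by
  rw [val_prod]
  exact Finset.sum_nonneg fun i _ => hM.zero_le_val _ _

theorem one_le_val_prod (hM : IwahoriForm M) {r c : ι → Fin n} (h : ∃ i, c i < r i) :
    1 ≤ val (∏ i, M (r i) (c i)) := by
  obtain ⟨i₀, hi₀⟩ := h
  rw [val_prod]
  exact (hM.2.2 _ _ hi₀).trans
    (Finset.single_le_sum (fun i _ => hM.zero_le_val _ _) (Finset.mem_univ i₀))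

theorem val_prod_diag (hM : IwahoriForm M) (r : ι → Fin n) :
    val (∏ i, M (r i) (r i)) = 0 := by
  rw [val_prod]
  exact Finset.sum_eq_zero fun i _ => hM.1 (r i)

end IwahoriForm

theorem minors_of_iwahori_form_general (F : Type*) [Field F]
    (n m : ℕ)
    (M : Matrix (Fin n) (Fin n) (LaurentSeries (AlgebraicClosure F)))
    (hM : IwahoriForm M) :
    ∀ s t : Fin m → Fin n, StrictMono s → StrictMono t →
      (0 ≤ val (M.submatrix s t).det) ∧
      (s = t → val (M.submatrix s t).det = 0) ∧
      (LexGT s t → 1 ≤ val (M.submatrix s t).det) := by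
  intro s t hs ht
  refine ⟨le_val_det fun σ => hM.zero_le_val_prod _ _, ?_, ?_⟩
  · rintro rfl
    refine val_det_eq_zero (hM.val_prod_diag s) fun σ hσ =>
      zero_lt_one.trans_le (hM.one_le_val_prod ?_)
    by_contra! hbelow
    exact hσ (Equiv.Perm.eq_one_of_forall_apply_le fun i => hs.le_iff_le.mp (hbelow i))
  · rintro ⟨p, -, hp⟩
    refine le_val_det fun σ => hM.one_le_val_prod ?_
    by_contra! hbelow
    exact (le_of_forall_comp_perm_le hs.monotone ht.monotone σ hbelow p).not_gt hp

/-- If `M` is an `n×n` matrix over `L` of Iwahori form and `1 ≤ m ≤ n`, then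
for all strictly increasing `m`-tuples `s`, `t` of indices, the determinant of the minor
`M_{s,t}` lies in `o_L`; the diagonal minors `M_{s,s}` have determinant in `o_L^×`; and if
`s` is lexicographically greater than `t` then `det M_{s,t} ∈ ε·o_L`.  (Equivalently,
`⋀^m M`, written in the lexicographically ordered basis of increasing `m`-tuples, is
again of Iwahori form.) -/
theorem minors_of_iwahori_form (F : Type*) [Field F] [Fintype F]
    (n m : ℕ) (hm : 1 ≤ m) (hmn : m ≤ n)
    (M : Matrix (Fin n) (Fin n) (LaurentSeries (AlgebraicClosure F)))
    (hM : IwahoriForm M) :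
    ∀ s t : Fin m → Fin n, StrictMono s → StrictMono t →
      (0 ≤ val (M.submatrix s t).det) ∧
      (s = t → val (M.submatrix s t).det = 0) ∧
      (LexGT s t → 1 ≤ val (M.submatrix s t).det) :=
  minors_of_iwahori_form_general F n m M hM
end
end

section
/- Let ν be strictly dominant and let g, g' ∈ U_1. Fix indices i < j. If g_{ij} = g'_{ij} and g_{pq} = g'_{pq} for all p < q with q − p < j − i, then (f_ν(g))_{ij} = (f_ν(g'))_{ij}. In other words, the (i,j) entry of f_ν(g) depends only on g_{ij} and on the entries of g strictly closer to the main diagonal than (i,j). -/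
noncomputable section

open Matrix

/-- The uniformizer ε of the Laurent series field. -/
def eps (K : Type*) [Field K] : LaurentSeries K := HahnSeries.single 1 1

/-- `σ : L → L` is the Frobenius automorphism: it fixes ε and raises each Laurent-series
coefficient to the `q`-th power.  (This property determines `σ` uniquely.) -/
def IsFrobenius (K : Type*) [Field K] (q : ℕ)
    (σ : LaurentSeries K → LaurentSeries K) : Prop :=
  ∀ (x : LaurentSeries K) (n : ℤ), (σ x).coeff n = (x.coeff n) ^ q

/-- Upper unitriangular matrix: an element of `U_1`. -/
def Unitri {K : Type*} [Field K] {n : ℕ}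
    (g : Matrix (Fin n) (Fin n) (LaurentSeries K)) : Prop :=
  (∀ i, g i i = 1) ∧ (∀ i j : Fin n, j < i → g i j = 0)

/-- `ν = (ν_1, …, ν_n)` is strictly dominant: `ν_1 > ν_2 > … > ν_n`. -/
def StrictDominant {n : ℕ} (ν : Fin n → ℤ) : Prop :=
  ∀ p q : Fin n, p < q → ν q < ν p

/-- The diagonal matrix `ε^ν = diag(ε^{ν_1}, …, ε^{ν_n})`. -/
def epsDiag (K : Type*) [Field K] {n : ℕ} (ν : Fin n → ℤ) :
    Matrix (Fin n) (Fin n) (LaurentSeries K) :=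
  Matrix.diagonal fun i => eps K ^ (ν i)

/-- The map `f_ν : U_1 → U_1`, `f_ν(h) = h⁻¹ · ε^ν · σ(h) · ε^{−ν}`. -/
def fnu {K : Type*} [Field K] {n : ℕ} (σ : LaurentSeries K → LaurentSeries K)
    (ν : Fin n → ℤ) (g : Matrix (Fin n) (Fin n) (LaurentSeries K)) :
    Matrix (Fin n) (Fin n) (LaurentSeries K) :=
  g⁻¹ * epsDiag K ν * g.map σ * epsDiag K (fun i => -ν i)

/-- The subgroup `U(o_L)` of `U_1`: unitriangular matrices with entries in `o_L`. -/
def UO (K : Type*) [Field K] (n : ℕ) :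
    Set (Matrix (Fin n) (Fin n) (LaurentSeries K)) :=
  {g | Unitri g ∧ ∀ p q : Fin n, 0 ≤ val (g p q)}

/-- `U_N = {g ∈ U_1 : val(g_{pq}) ≥ (q−p)·N for all p < q}`
(equivalently `ε^{−μ}·U(o_L)·ε^{μ}` for `μ = (N, 2N, …, nN)`). -/
def UN (K : Type*) [Field K] (n : ℕ) (N : ℤ) :
    Set (Matrix (Fin n) (Fin n) (LaurentSeries K)) :=
  {g | Unitri g ∧ ∀ p q : Fin n, p < q →
    ((((q : ℤ) - (p : ℤ)) * N : ℤ) : WithTop ℤ) ≤ val (g p q)}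

/-- `U_{m,N} = {g ∈ U_1 : val(g_{pq}) ≥ (q−p)·N + m for all p < q}`. -/
def UmN (K : Type*) [Field K] (n : ℕ) (m N : ℤ) :
    Set (Matrix (Fin n) (Fin n) (LaurentSeries K)) :=
  {g | Unitri g ∧ ∀ p q : Fin n, p < q →
    ((((q : ℤ) - (p : ℤ)) * N + m : ℤ) : WithTop ℤ) ≤ val (g p q)}

/-! Restricting upper triangular matrices to the block of an interval of indices `[i, j]` is
multiplicative, hence commutes with inverses and with the product `h⁻¹ · ε^ν · σ(h) · ε^{−ν}`.
So the `[i, j]`-block of `f_ν(g)` is determined by the `[i, j]`-block of `g`, whose entries above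
the diagonal are `g_{ij}` and entries strictly closer to the diagonal. -/

namespace Matrix

variable {α R : Type*} [LinearOrder α] [Fintype α] {s : Set α} [Fintype s]

theorem BlockTriangular.submatrix_mul [NonUnitalNonAssocSemiring R] {A B : Matrix α α R}
    (hA : A.BlockTriangular id) (hB : B.BlockTriangular id) (hs : s.OrdConnected) :
    ((A * B).submatrix (↑) (↑) : Matrix s s R) = A.submatrix (↑) (↑) * B.submatrix (↑) (↑) := by
  ext p q
  simp only [submatrix_apply, mul_apply]
  rw [← Finset.sum_subtype (p := (· ∈ s)) s.toFinset (fun _ => Set.mem_toFinset)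
    (fun c => A p c * B c q)]
  refine (Finset.sum_subset (Finset.subset_univ _) fun c _ hc => ?_).symm
  rw [Set.mem_toFinset] at hc
  rcases lt_or_ge c p with hcp | hpc
  · rw [hA hcp, zero_mul]
  · have hqc : q < c := lt_of_not_ge fun hcq => hc (hs.out p.2 q.2 ⟨hpc, hcq⟩)
    rw [hB hqc, mul_zero]

theorem BlockTriangular.submatrix_inv [CommRing R] {A : Matrix α α R}
    (hA : A.BlockTriangular id) (hdet : IsUnit A.det) (hs : s.OrdConnected) :
    (A⁻¹.submatrix (↑) (↑) : Matrix s s R) = (A.submatrix (↑) (↑))⁻¹ := by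
  have := A.invertibleOfIsUnitDet hdet
  refine (inv_eq_left_inv ?_).symm
  rw [← (blockTriangular_inv_of_blockTriangular hA).submatrix_mul hA hs,
    nonsing_inv_mul A hdet, submatrix_one _ Subtype.val_injective]

end Matrix

theorem IsFrobenius.map_zero {K : Type*} [Field K] {q : ℕ} {σ : LaurentSeries K → LaurentSeries K}
    (hσ : IsFrobenius K q σ) (hq : q ≠ 0) : σ 0 = 0 := by
  ext m
  rw [hσ, HahnSeries.coeff_zero, zero_pow hq]

namespace Unitri

variable {K : Type*} [Field K] {n : ℕ} {g g' : Matrix (Fin n) (Fin n) (LaurentSeries K)}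

theorem blockTriangular (hg : Unitri g) : g.BlockTriangular id := fun p q hqp => hg.2 p q hqp

theorem isUnit_det (hg : Unitri g) : IsUnit g.det := by
  simp [det_of_isUpperTriangular hg.blockTriangular, hg.1]

theorem blockTriangular_map {σ : LaurentSeries K → LaurentSeries K} (hσ0 : σ 0 = 0)
    (hg : Unitri g) : (g.map σ).BlockTriangular id := fun p q hqp => by
  rw [map_apply, hg.2 p q hqp, hσ0]

theorem submatrix_eq_of_upper_eq (hg : Unitri g) (hg' : Unitri g') {s : Set (Fin n)}
    (h : ∀ p q : s, p < q → g p q = g' p q) :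
    (g.submatrix (↑) (↑) : Matrix s s _) = g'.submatrix (↑) (↑) := by
  refine Matrix.ext fun p q => ?_
  rcases lt_trichotomy p q with hpq | rfl | hqp
  · exact h p q hpq
  · simp only [submatrix_apply, hg.1, hg'.1]
  · simp only [submatrix_apply, hg.2 _ _ hqp, hg'.2 _ _ hqp]

end Unitri

theorem fnu_submatrix {K : Type*} [Field K] {n : ℕ} {σ : LaurentSeries K → LaurentSeries K}
    (hσ0 : σ 0 = 0) (ν : Fin n → ℤ) {g : Matrix (Fin n) (Fin n) (LaurentSeries K)}
    (hg : Unitri g) {s : Set (Fin n)} [Fintype s] (hs : s.OrdConnected) :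
    ((fnu σ ν g).submatrix (↑) (↑) : Matrix s s _) =
      (g.submatrix (↑) (↑))⁻¹ * (epsDiag K ν).submatrix (↑) (↑) * (g.submatrix (↑) (↑)).map σ *
        (epsDiag K fun i => -ν i).submatrix (↑) (↑) := by
  have := g.invertibleOfIsUnitDet hg.isUnit_det
  have hinv := blockTriangular_inv_of_blockTriangular hg.blockTriangular
  have hD (μ : Fin n → ℤ) : (epsDiag K μ).BlockTriangular id := blockTriangular_diagonal _
  have hσg := hg.blockTriangular_map hσ0
  rw [fnu, ((hinv.mul (hD ν)).mul hσg).submatrix_mul (hD _) hs,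
    (hinv.mul (hD ν)).submatrix_mul hσg hs, hinv.submatrix_mul (hD ν) hs,
    hg.blockTriangular.submatrix_inv hg.isUnit_det hs, submatrix_map]

theorem fnu_entry_dependence_general (F : Type*) [Field F] [Fintype F] (n : ℕ)
    (σ : LaurentSeries (AlgebraicClosure F) → LaurentSeries (AlgebraicClosure F))
    (hσ : IsFrobenius (AlgebraicClosure F) (Fintype.card F) σ)
    (ν : Fin n → ℤ)
    (g g' : Matrix (Fin n) (Fin n) (LaurentSeries (AlgebraicClosure F)))
    (hg : Unitri g) (hg' : Unitri g') (i j : Fin n) (hij : i < j)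
    (h1 : g i j = g' i j)
    (h2 : ∀ p q : Fin n, p < q → (q : ℤ) - (p : ℤ) < (j : ℤ) - (i : ℤ) → g p q = g' p q) :
    fnu σ ν g i j = fnu σ ν g' i j := by
  have hσ0 := hσ.map_zero Fintype.card_ne_zero
  have hblock := hg.submatrix_eq_of_upper_eq hg' (s := Set.Icc i j)
    fun ⟨p, hip, hpj⟩ ⟨q, hiq, hqj⟩ hpq => by
    by_cases hlt : (q : ℤ) - (p : ℤ) < (j : ℤ) - (i : ℤ)
    · exact h2 p q hpq hlt
    · obtain ⟨rfl, rfl⟩ : p = i ∧ q = j := by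
        simp only [Fin.le_def] at hip hpj hiq hqj
        omega
      exact h1
  have hs : (Set.Icc i j).OrdConnected := Set.ordConnected_Icc
  have hfnu := fnu_submatrix hσ0 ν hg hs
  rw [hblock, ← fnu_submatrix hσ0 ν hg' hs] at hfnu
  exact congr_fun₂ hfnu ⟨i, le_rfl, hij.le⟩ ⟨j, hij.le, le_rfl⟩

/-- the `(i,j)` entry of `f_ν(g)` depends only on `g_{ij}` and on the entries
of `g` strictly closer to the main diagonal than `(i,j)`. -/
theorem fnu_entry_dependence (F : Type*) [Field F] [Fintype F] (n : ℕ) (hn : 2 ≤ n)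
    (σ : LaurentSeries (AlgebraicClosure F) → LaurentSeries (AlgebraicClosure F))
    (hσ : IsFrobenius (AlgebraicClosure F) (Fintype.card F) σ)
    (ν : Fin n → ℤ) (hν : StrictDominant ν)
    (g g' : Matrix (Fin n) (Fin n) (LaurentSeries (AlgebraicClosure F)))
    (hg : Unitri g) (hg' : Unitri g') (i j : Fin n) (hij : i < j)
    (h1 : g i j = g' i j)
    (h2 : ∀ p q : Fin n, p < q → (q : ℤ) - (p : ℤ) < (j : ℤ) - (i : ℤ) → g p q = g' p q) :
    fnu σ ν g i j = fnu σ ν g' i j :=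
  fnu_entry_dependence_general F n σ hσ ν g g' hg hg' i j hij h1 h2
end
end

section
/- If ν is strictly dominant, then f_ν : U_1 → U_1 is a bijection, and f_ν(U(o_L)) = U(o_L). -/
noncomputable section

open Matrix

/-!
Write `f_ν(h) = u` as `h u = ε^ν σ(h) ε^{-ν}`. For unitriangular `h`, `u` and `i < j` this reads
`h_ij - ε^{ν_i - ν_j} σ(h_ij) = -∑_{r<j} h_ir u_rj`, so row `i` of `h` is determined from left to
right by inverting the twisted Lang map `x ↦ x - ε^d σ(x)`, `d = ν_i - ν_j > 0`. On coefficients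
this map is `x_m ↦ x_m - x_{m-d}^q`; since `d > 0` the equation `x_m = c_m + x_{m-d}^q` is solved
uniquely by recursion upwards from the bottom of the support, and `x_m = 0` for `m < 0` as soon as
`c_m = 0` for `m < 0`. In the other direction, `f_ν(h) = h⁻¹ (ε^ν σ(h) ε^{-ν})` is integral when
`h` is, because `ν_i ≥ ν_j` for `i ≤ j` and `h⁻¹ = adj h`.
-/

section

variable {K : Type*} [Field K]

def integers (K : Type*) [Field K] : Subring (LaurentSeries K) where
  carrier := {x | 0 ≤ val x}
  mul_mem' {x y} (hx : 0 ≤ val x) (hy : 0 ≤ val y) :=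
    (add_nonneg hx hy).trans HahnSeries.orderTop_add_le_mul
  one_mem' := show 0 ≤ val 1 from HahnSeries.orderTop_one.ge
  add_mem' {x y} (hx : 0 ≤ val x) (hy : 0 ≤ val y) :=
    (le_min hx hy).trans HahnSeries.min_orderTop_le_orderTop_add
  zero_mem' := by simp [val]
  neg_mem' {x} (hx : 0 ≤ val x) := show 0 ≤ val (-x) by rwa [val, HahnSeries.orderTop_neg]

theorem mem_integers {x : LaurentSeries K} : x ∈ integers K ↔ 0 ≤ val x := Iff.rfl

theorem mem_integers_iff_coeff {x : LaurentSeries K} :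
    x ∈ integers K ↔ ∀ m < 0, x.coeff m = 0 := by
  rw [mem_integers, val, ← WithTop.coe_zero, HahnSeries.le_orderTop_iff_forall]
  simp

theorem eps_zpow_mem_integers {d : ℤ} (hd : 0 ≤ d) : eps K ^ d ∈ integers K := by
  lift d to ℕ using hd
  rw [zpow_natCast]
  refine pow_mem ?_ d
  rw [mem_integers, val, eps, HahnSeries.orderTop_single one_ne_zero]
  exact_mod_cast zero_le_one

theorem coeff_eps_zpow_mul (d m : ℤ) (x : LaurentSeries K) :
    (eps K ^ d * x).coeff m = x.coeff (m - d) := by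
  rw [eps, ← RatFunc.single_zpow, HahnSeries.coeff_single_mul, one_mul]

theorem Subring.mem_matrix {R : Type*} [Ring R] {n : Type*} [Fintype n] [DecidableEq n]
    {S : Subring R} {A : Matrix n n R} : A ∈ S.matrix ↔ ∀ i j, A i j ∈ S :=
  Iff.rfl

theorem Matrix.adjugate_mem_matrix {R : Type*} [CommRing R] {n : Type*} [Fintype n]
    [DecidableEq n] {S : Subring R} {A : Matrix n n R} (hA : A ∈ S.matrix) :
    A.adjugate ∈ S.matrix := by
  obtain ⟨B, rfl⟩ : ∃ B : Matrix n n S, B.map S.subtype = A :=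
    ⟨Matrix.of fun i j => ⟨A i j, hA i j⟩, rfl⟩
  intro i j
  rw [← RingHom.mapMatrix_apply, ← RingHom.map_adjugate]
  exact (B.adjugate i j).prop

namespace IsFrobenius

variable {q : ℕ} {σ : LaurentSeries K → LaurentSeries K}

theorem map_zero_s4 (hσ : IsFrobenius K q σ) (hq : q ≠ 0) : σ 0 = 0 := by
  ext m
  rw [hσ, HahnSeries.coeff_zero, zero_pow hq]

theorem map_one (hσ : IsFrobenius K q σ) (hq : q ≠ 0) : σ 1 = 1 := by
  ext m
  rw [hσ, HahnSeries.coeff_one]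
  split_ifs
  · exact one_pow q
  · exact zero_pow hq

theorem map_mem_integers (hσ : IsFrobenius K q σ) (hq : q ≠ 0) {x : LaurentSeries K}
    (hx : x ∈ integers K) : σ x ∈ integers K := by
  rw [mem_integers_iff_coeff] at hx ⊢
  intro m hm
  rw [hσ, hx m hm, zero_pow hq]

end IsFrobenius

def langMap (σ : LaurentSeries K → LaurentSeries K) (d : ℤ) (x : LaurentSeries K) :
    LaurentSeries K :=
  x - eps K ^ d * σ x

section LangMap

variable {q : ℕ} {σ : LaurentSeries K → LaurentSeries K} {d : ℤ}

theorem IsFrobenius.coeff_langMap (hσ : IsFrobenius K q σ) (x : LaurentSeries K) (m : ℤ) :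
    (langMap σ d x).coeff m = x.coeff m - x.coeff (m - d) ^ q := by
  rw [langMap, HahnSeries.coeff_sub, coeff_eps_zpow_mul, hσ]

def langMapPreimageCoeff (q : ℕ) (hd : 0 < d) (c : LaurentSeries K) (m : ℤ) : K :=
  if m < c.order then 0 else c.coeff m + langMapPreimageCoeff q hd c (m - d) ^ q
termination_by (m - c.order + 1).toNat
decreasing_by omega

theorem langMapPreimageCoeff_of_lt (hd : 0 < d) (c : LaurentSeries K) {m : ℤ}
    (hm : m < c.order) : langMapPreimageCoeff q hd c m = 0 := by
  rw [langMapPreimageCoeff, if_pos hm]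

theorem bddBelow_support_langMapPreimageCoeff (hd : 0 < d) (c : LaurentSeries K) :
    BddBelow (Function.support (langMapPreimageCoeff q hd c)) :=
  ⟨c.order, fun _ hm => not_lt.1 fun h => hm (langMapPreimageCoeff_of_lt hd c h)⟩

theorem langMap_surjective (hσ : IsFrobenius K q σ) (hq : q ≠ 0) (hd : 0 < d) :
    Function.Surjective (langMap σ d) := by
  intro c
  refine ⟨HahnSeries.ofSuppBddBelow _ (bddBelow_support_langMapPreimageCoeff (q := q) hd c), ?_⟩
  ext m
  rw [hσ.coeff_langMap, HahnSeries.coeff_ofSuppBddBelow, langMapPreimageCoeff]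
  split_ifs with hm
  · rw [langMapPreimageCoeff_of_lt hd c (by omega), zero_pow hq, sub_zero,
      HahnSeries.coeff_eq_zero_of_lt_order hm]
  · exact add_sub_cancel_right _ _

theorem langMap_injective (hσ : IsFrobenius K q σ) (hd : 0 < d) :
    Function.Injective (langMap σ d) := by
  intro x y hxy
  rw [← sub_eq_zero, ← HahnSeries.coeff_order_eq_zero]
  set m := (x - y).order
  have hbelow : x.coeff (m - d) = y.coeff (m - d) := sub_eq_zero.1 <| by
    rw [← HahnSeries.coeff_sub]; exact HahnSeries.coeff_eq_zero_of_lt_order (by omega)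
  have hm := congrArg (HahnSeries.coeff · m) hxy
  simp only [hσ.coeff_langMap, hbelow, sub_left_inj] at hm
  rw [HahnSeries.coeff_sub, hm, sub_self]

theorem mem_integers_of_langMap_mem (hσ : IsFrobenius K q σ) (hq : q ≠ 0) (hd : 0 < d)
    {x : LaurentSeries K} (hx : langMap σ d x ∈ integers K) : x ∈ integers K := by
  rw [mem_integers_iff_coeff] at hx ⊢
  by_contra! hneg
  obtain ⟨m, hm, hxm⟩ := hneg
  have hx0 : x ≠ 0 := by rintro rfl; exact hxm rfl
  have hord : x.order < 0 := (HahnSeries.order_le_of_coeff_ne_zero hxm).trans_lt hm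
  have hbelow : x.coeff (x.order - d) = 0 := HahnSeries.coeff_eq_zero_of_lt_order (by omega)
  have hcoeff := hx x.order hord
  rw [hσ.coeff_langMap, hbelow, zero_pow hq, sub_zero, HahnSeries.coeff_order_eq_zero] at hcoeff
  exact hx0 hcoeff

end LangMap

namespace Unitri

variable {n : ℕ} {A B : Matrix (Fin n) (Fin n) (LaurentSeries K)}

theorem mul_apply_eq_sum_Iio_add (hB : Unitri B) (A : Matrix (Fin n) (Fin n) (LaurentSeries K))
    (i j : Fin n) : (A * B) i j = ∑ r ∈ Finset.Iio j, A i r * B r j + A i j := by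
  rw [Matrix.mul_apply, ← Finset.sum_subset (Finset.subset_univ (Finset.Iic j)),
    ← Finset.sum_Iio_add_eq_sum_Iic, hB.1, mul_one]
  intro r _ hr
  rw [hB.2 r j (not_le.1 (Finset.mem_Iic.not.1 hr)), mul_zero]

theorem mul_apply_self (hB : Unitri B) (hA : A.BlockTriangular id) (i : Fin n) :
    (A * B) i i = A i i := by
  rw [hB.mul_apply_eq_sum_Iio_add, add_eq_right]
  exact Finset.sum_eq_zero fun r hr => by rw [hA (Finset.mem_Iio.1 hr), zero_mul]

theorem mul (hA : Unitri A) (hB : Unitri B) : Unitri (A * B) :=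
  ⟨fun i => (hB.mul_apply_self hA.2 i).trans (hA.1 i), Matrix.BlockTriangular.mul hA.2 hB.2⟩

theorem det_eq_one (hA : Unitri A) : A.det = 1 := by
  rw [Matrix.det_of_isUpperTriangular hA.2]
  exact Finset.prod_eq_one fun i _ => hA.1 i

theorem isUnit_det_s4 (hA : Unitri A) : IsUnit A.det := hA.det_eq_one ▸ isUnit_one

theorem inv (hA : Unitri A) : Unitri A⁻¹ := by
  have := A.invertibleOfIsUnitDet hA.isUnit_det_s4
  have hA' : A⁻¹.BlockTriangular id := Matrix.blockTriangular_inv_of_blockTriangular hA.2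
  refine ⟨fun i => ?_, hA'⟩
  rw [← hA.mul_apply_self hA' i, Matrix.nonsing_inv_mul A hA.isUnit_det_s4, Matrix.one_apply_eq]

theorem inv_eq_adjugate (hA : Unitri A) : A⁻¹ = A.adjugate := by
  rw [Matrix.inv_def, hA.det_eq_one, Ring.inverse_one, one_smul]

theorem ext_iff_of_lt (hA : Unitri A) (hB : Unitri B) :
    A = B ↔ ∀ i j, i < j → A i j = B i j := by
  refine ⟨fun h i j _ => h ▸ rfl, fun h => Matrix.ext fun i j => ?_⟩
  rcases lt_trichotomy i j with hij | rfl | hij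
  · exact h i j hij
  · rw [hA.1, hB.1]
  · rw [hA.2 i j hij, hB.2 i j hij]

end Unitri

def twist (σ : LaurentSeries K → LaurentSeries K) {n : ℕ} (ν : Fin n → ℤ)
    (g : Matrix (Fin n) (Fin n) (LaurentSeries K)) : Matrix (Fin n) (Fin n) (LaurentSeries K) :=
  epsDiag K ν * g.map σ * epsDiag K (fun i => -ν i)

section Twist

variable {n q : ℕ} {σ : LaurentSeries K → LaurentSeries K} {ν : Fin n → ℤ}
  {g u : Matrix (Fin n) (Fin n) (LaurentSeries K)}

theorem twist_apply (i j : Fin n) : twist σ ν g i j = eps K ^ (ν i - ν j) * σ (g i j) := by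
  have heps : eps K ≠ 0 := HahnSeries.single_ne_zero one_ne_zero
  rw [twist, epsDiag, epsDiag, Matrix.mul_diagonal, Matrix.diagonal_mul, Matrix.map_apply,
    zpow_sub₀ heps, _root_.zpow_neg, div_eq_mul_inv]
  ring

theorem fnu_eq_inv_mul_twist : fnu σ ν g = g⁻¹ * twist σ ν g := by
  simp only [fnu, twist, Matrix.mul_assoc]

theorem Unitri.twist (hσ : IsFrobenius K q σ) (hq : q ≠ 0) (hg : Unitri g) :
    Unitri (twist σ ν g) := by
  refine ⟨fun i => ?_, fun i j hij => ?_⟩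
  · rw [twist_apply, hg.1, hσ.map_one hq, sub_self, zpow_zero, one_mul]
  · rw [twist_apply, hg.2 i j hij, hσ.map_zero_s4 hq, mul_zero]

theorem Unitri.fnu (hσ : IsFrobenius K q σ) (hq : q ≠ 0) (hg : Unitri g) :
    Unitri (fnu σ ν g) := by
  rw [fnu_eq_inv_mul_twist]
  exact hg.inv.mul (hg.twist hσ hq)

theorem fnu_eq_iff (hg : Unitri g) : fnu σ ν g = u ↔ g * u = twist σ ν g := by
  rw [fnu_eq_inv_mul_twist]
  constructor
  · rintro rfl
    exact Matrix.mul_nonsing_inv_cancel_left _ _ hg.isUnit_det_s4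
  · intro h
    rw [← h, Matrix.nonsing_inv_mul_cancel_left _ _ hg.isUnit_det_s4]

theorem mul_eq_twist_iff (hσ : IsFrobenius K q σ) (hq : q ≠ 0) (hg : Unitri g) (hu : Unitri u) :
    g * u = twist σ ν g ↔
      ∀ i j, i < j → langMap σ (ν i - ν j) (g i j) = -∑ r ∈ Finset.Iio j, g i r * u r j := by
  rw [(hg.mul hu).ext_iff_of_lt (hg.twist hσ hq)]
  refine forall₂_congr fun i j => imp_congr_right fun _ => ?_
  rw [hu.mul_apply_eq_sum_Iio_add, twist_apply, langMap]
  constructor <;> intro h <;> linear_combination h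

end Twist

def fnuPreimage (σ : LaurentSeries K → LaurentSeries K) {n : ℕ} (ν : Fin n → ℤ)
    (u : Matrix (Fin n) (Fin n) (LaurentSeries K)) (i j : Fin n) : LaurentSeries K :=
  if i < j then
    Function.invFun (langMap σ (ν i - ν j))
      (-∑ r ∈ (Finset.Iio j).attach, fnuPreimage σ ν u i r * u r j)
  else if i = j then 1 else 0
termination_by j
decreasing_by exact Fin.lt_def.1 (Finset.mem_Iio.1 r.2)

section Bijection

variable {n q : ℕ} {σ : LaurentSeries K → LaurentSeries K} {ν : Fin n → ℤ}
  {g u : Matrix (Fin n) (Fin n) (LaurentSeries K)}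

theorem fnuPreimage_of_lt {i j : Fin n} (hij : i < j) :
    fnuPreimage σ ν u i j = Function.invFun (langMap σ (ν i - ν j))
      (-∑ r ∈ Finset.Iio j, fnuPreimage σ ν u i r * u r j) := by
  rw [fnuPreimage, if_pos hij,
    Finset.sum_attach (Finset.Iio j) fun r => fnuPreimage σ ν u i r * u r j]

theorem unitri_fnuPreimage : Unitri (Matrix.of (fnuPreimage σ ν u)) := by
  refine ⟨fun i => ?_, fun i j hij => ?_⟩ <;> rw [Matrix.of_apply, fnuPreimage]
  · rw [if_neg (lt_irrefl i), if_pos rfl]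
  · rw [if_neg (not_lt.2 hij.le), if_neg hij.ne']

theorem fnu_fnuPreimage (hσ : IsFrobenius K q σ) (hq : q ≠ 0) (hν : StrictAnti ν)
    (hu : Unitri u) : fnu σ ν (Matrix.of (fnuPreimage σ ν u)) = u := by
  rw [fnu_eq_iff unitri_fnuPreimage, mul_eq_twist_iff hσ hq unitri_fnuPreimage hu]
  intro i j hij
  simp only [Matrix.of_apply]
  rw [fnuPreimage_of_lt hij]
  exact Function.rightInverse_invFun (langMap_surjective hσ hq (sub_pos.2 (hν hij))) _

theorem fnu_injOn (hσ : IsFrobenius K q σ) (hq : q ≠ 0) (hν : StrictAnti ν) :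
    Set.InjOn (fnu σ ν) {g | Unitri g} := by
  intro g hg g' hg' h
  have hu : Unitri (fnu σ ν g') := hg'.fnu hσ hq
  have e := (mul_eq_twist_iff hσ hq hg hu).1 ((fnu_eq_iff hg).1 h)
  have e' := (mul_eq_twist_iff hσ hq hg' hu).1 ((fnu_eq_iff hg').1 rfl)
  refine Matrix.ext fun i j => ?_
  induction j using WellFoundedLT.induction with | _ j ih
  rcases lt_trichotomy i j with hij | rfl | hij
  · refine langMap_injective hσ (sub_pos.2 (hν hij)) ?_
    rw [e i j hij, e' i j hij]
    exact congrArg _ (Finset.sum_congr rfl fun r hr => by rw [ih r (Finset.mem_Iio.1 hr)])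
  · rw [hg.1, hg'.1]
  · rw [hg.2 i j hij, hg'.2 i j hij]

theorem mem_matrix_integers_of_fnu_eq (hσ : IsFrobenius K q σ) (hq : q ≠ 0)
    (hν : StrictAnti ν) (hg : Unitri g) (hu : Unitri u) (huO : u ∈ (integers K).matrix)
    (h : fnu σ ν g = u) : g ∈ (integers K).matrix := by
  have e := (mul_eq_twist_iff hσ hq hg hu).1 ((fnu_eq_iff hg).1 h)
  rw [Subring.mem_matrix] at huO ⊢
  intro i j
  induction j using WellFoundedLT.induction with | _ j ih
  rcases lt_trichotomy i j with hij | rfl | hij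
  · refine mem_integers_of_langMap_mem hσ hq (sub_pos.2 (hν hij)) ?_
    rw [e i j hij]
    exact neg_mem (sum_mem fun r hr => mul_mem (ih r (Finset.mem_Iio.1 hr)) (huO r j))
  · exact hg.1 i ▸ one_mem _
  · exact hg.2 i j hij ▸ zero_mem _

theorem fnu_mem_matrix_integers (hσ : IsFrobenius K q σ) (hq : q ≠ 0) (hν : StrictAnti ν)
    (hg : Unitri g) (hgO : g ∈ (integers K).matrix) : fnu σ ν g ∈ (integers K).matrix := by
  rw [fnu_eq_inv_mul_twist, hg.inv_eq_adjugate]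
  refine mul_mem (Matrix.adjugate_mem_matrix hgO) (Subring.mem_matrix.2 fun i j => ?_)
  rw [twist_apply]
  rcases lt_or_ge j i with hij | hij
  · rw [hg.2 i j hij, hσ.map_zero_s4 hq, mul_zero]
    exact zero_mem _
  · exact mul_mem (eps_zpow_mem_integers (sub_nonneg.2 (hν.antitone hij)))
      (hσ.map_mem_integers hq (hgO i j))

theorem fnu_bijOn (hσ : IsFrobenius K q σ) (hq : q ≠ 0) (hν : StrictAnti ν) :
    Set.BijOn (fnu σ ν) {g | Unitri g} {g | Unitri g} :=
  ⟨fun _ hg => hg.fnu hσ hq, fnu_injOn hσ hq hν,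
    fun _ hu => ⟨_, unitri_fnuPreimage, fnu_fnuPreimage hσ hq hν hu⟩⟩

theorem fnu_image_UO (hσ : IsFrobenius K q σ) (hq : q ≠ 0) (hν : StrictAnti ν) :
    fnu σ ν '' UO K n = UO K n := by
  ext u
  constructor
  · rintro ⟨g, ⟨hg, hgO⟩, rfl⟩
    exact ⟨(fnu_bijOn hσ hq hν).mapsTo hg, fnu_mem_matrix_integers hσ hq hν hg hgO⟩
  · rintro ⟨hu, huO⟩
    exact ⟨_, ⟨unitri_fnuPreimage, mem_matrix_integers_of_fnu_eq hσ hq hν unitri_fnuPreimage hu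
      huO (fnu_fnuPreimage hσ hq hν hu)⟩, fnu_fnuPreimage hσ hq hν hu⟩

end Bijection

end

theorem fnu_bijective_general (F : Type*) [Field F] [Fintype F] (n : ℕ)
    (σ : LaurentSeries (AlgebraicClosure F) → LaurentSeries (AlgebraicClosure F))
    (hσ : IsFrobenius (AlgebraicClosure F) (Fintype.card F) σ)
    (ν : Fin n → ℤ) (hν : StrictDominant ν) :
    Set.BijOn (fnu σ ν) {g | Unitri g} {g | Unitri g} ∧
    fnu σ ν '' UO (AlgebraicClosure F) n = UO (AlgebraicClosure F) n :=
  ⟨fnu_bijOn hσ Fintype.card_ne_zero hν, fnu_image_UO hσ Fintype.card_ne_zero hν⟩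

/-- if `ν` is strictly dominant, then `f_ν : U_1 → U_1` is a bijection and
`f_ν(U(o_L)) = U(o_L)`. -/
theorem fnu_bijective (F : Type*) [Field F] [Fintype F] (n : ℕ) (hn : 2 ≤ n)
    (σ : LaurentSeries (AlgebraicClosure F) → LaurentSeries (AlgebraicClosure F))
    (hσ : IsFrobenius (AlgebraicClosure F) (Fintype.card F) σ)
    (ν : Fin n → ℤ) (hν : StrictDominant ν) :
    Set.BijOn (fnu σ ν) {g | Unitri g} {g | Unitri g} ∧
    fnu σ ν '' UO (AlgebraicClosure F) n = UO (AlgebraicClosure F) n :=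
  fnu_bijective_general F n σ hσ ν hν
end
end

section
/- If ν is strictly dominant and g ∈ U_1 satisfies ε^ν·σ(g)·ε^{−ν} = g, then g is the identity matrix. -/
noncomputable section

open Matrix

/-! An entry above the diagonal of a fixed point satisfies `x = ε^d · σ(x)` with `d > 0`. Since
`σ` does not lower the ε-adic order, the order of the right-hand side exceeds that of `x` by `d`,
which forces `x = 0`. -/

theorem eps_zpow_eq_single (K : Type*) [Field K] (d : ℤ) : eps K ^ d = HahnSeries.single d 1 :=
  (RatFunc.single_zpow d).symm

theorem orderTop_eps_zpow (K : Type*) [Field K] (d : ℤ) : (eps K ^ d).orderTop = d := by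
  rw [eps_zpow_eq_single, HahnSeries.orderTop_single one_ne_zero]

theorem IsFrobenius.orderTop_le {K : Type*} [Field K] {q : ℕ} (hq : q ≠ 0)
    {σ : LaurentSeries K → LaurentSeries K} (hσ : IsFrobenius K q σ) (x : LaurentSeries K) :
    x.orderTop ≤ (σ x).orderTop :=
  HahnSeries.le_orderTop_iff_forall.2 fun j hj => by
    rw [hσ, HahnSeries.coeff_eq_zero_of_lt_orderTop hj, zero_pow hq]

theorem IsFrobenius.eq_zero_of_eq_eps_zpow_mul {K : Type*} [Field K] {q : ℕ} (hq : q ≠ 0)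
    {σ : LaurentSeries K → LaurentSeries K} (hσ : IsFrobenius K q σ)
    {d : ℤ} (hd : 0 < d) {x : LaurentSeries K} (hx : x = eps K ^ d * σ x) : x = 0 := by
  by_contra hx0
  obtain ⟨m, hm⟩ := WithTop.ne_top_iff_exists.1 (HahnSeries.orderTop_ne_top.2 hx0)
  have hle : (d + m : ℤ) ≤ (m : WithTop ℤ) :=
    calc ((d + m : ℤ) : WithTop ℤ) = (eps K ^ d).orderTop + x.orderTop := by
          rw [orderTop_eps_zpow, ← hm]; rfl
      _ ≤ (eps K ^ d * σ x).orderTop := by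
          rw [HahnSeries.orderTop_mul]; gcongr; exact hσ.orderTop_le hq x
      _ = m := by rw [← hx, hm]
  have := WithTop.coe_le_coe.1 hle
  omega

theorem epsDiag_mul_mul_epsDiag_neg_apply {K : Type*} [Field K] {n : ℕ} (ν : Fin n → ℤ)
    (M : Matrix (Fin n) (Fin n) (LaurentSeries K)) (i j : Fin n) :
    (epsDiag K ν * M * epsDiag K (fun i => -ν i)) i j = eps K ^ (ν i - ν j) * M i j := by
  have heps : eps K ≠ 0 := HahnSeries.single_ne_zero one_ne_zero
  rw [epsDiag, epsDiag, mul_diagonal, diagonal_mul, mul_right_comm, ← zpow_add₀ heps,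
    sub_eq_add_neg]

theorem Unitri.eq_one {K : Type*} [Field K] {n : ℕ}
    {g : Matrix (Fin n) (Fin n) (LaurentSeries K)}
    (hg : Unitri g) (hupper : ∀ i j, i < j → g i j = 0) : g = 1 := by
  ext i j
  rcases lt_trichotomy i j with hij | rfl | hij
  · rw [hupper i j hij, one_apply_ne hij.ne]
  · rw [hg.1 i, one_apply_eq]
  · rw [hg.2 i j hij, one_apply_ne hij.ne']

theorem fixed_point_of_twisted_conjugation_general (F : Type*) [Field F] [Fintype F]
    (n : ℕ)
    (σ : LaurentSeries (AlgebraicClosure F) → LaurentSeries (AlgebraicClosure F))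
    (hσ : IsFrobenius (AlgebraicClosure F) (Fintype.card F) σ)
    (ν : Fin n → ℤ) (hν : StrictDominant ν)
    (g : Matrix (Fin n) (Fin n) (LaurentSeries (AlgebraicClosure F)))
    (hg : Unitri g)
    (h : epsDiag (AlgebraicClosure F) ν * g.map σ * epsDiag (AlgebraicClosure F) (fun i => -ν i) = g) :
    g = 1 := by
  refine hg.eq_one fun i j hij => hσ.eq_zero_of_eq_eps_zpow_mul Fintype.card_ne_zero
    (sub_pos.2 (hν i j hij)) ?_
  have hij_entry := congrFun (congrFun h i) j
  rwa [epsDiag_mul_mul_epsDiag_neg_apply, map_apply, eq_comm] at hij_entry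

/-- if `ν` is strictly dominant and `g ∈ U_1` satisfies
`ε^ν·σ(g)·ε^{−ν} = g`, then `g` is the identity matrix. -/
theorem fixed_point_of_twisted_conjugation (F : Type*) [Field F] [Fintype F]
    (n : ℕ) (hn : 2 ≤ n)
    (σ : LaurentSeries (AlgebraicClosure F) → LaurentSeries (AlgebraicClosure F))
    (hσ : IsFrobenius (AlgebraicClosure F) (Fintype.card F) σ)
    (ν : Fin n → ℤ) (hν : StrictDominant ν)
    (g : Matrix (Fin n) (Fin n) (LaurentSeries (AlgebraicClosure F)))
    (hg : Unitri g)
    (h : epsDiag (AlgebraicClosure F) ν * g.map σ * epsDiag (AlgebraicClosure F) (fun i => -ν i) = g) :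
    g = 1 :=
  fixed_point_of_twisted_conjugation_general F n σ hσ ν hν g hg h
end
end
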